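/- arXiv:2302.07552 — 2 statements merged into one kernel-verified Lean document; each statement's English description precedes it below -/
import Mathlib

section
/- Smoothness of B-splines: for every order k ≥ 1 and index 0 ≤ ℓ ≤ n−k, the B-spline B_{ℓ,k} is (k−1)-times continuously differentiable on all of ℝ. -/
/-!
Over strictly increasing knots the B-spline is a scaled divided difference of truncated powers,
`B_{ℓ,k}(x) = (ξ_{ℓ+k+1} - ξ_ℓ) · [ξ_ℓ, …, ξ_{ℓ+k+1}] (· - x)₊^k`.
This follows from the Cox–de Boor recursion by induction on `k`, since
`(t - x)₊^{k+1} = (t - x) (t - x)₊^k` and divided differences obey a Leibniz rule against the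
linear factor `t - x`. For fixed `t`, the map `x ↦ (t - x)₊^k` is `C^{k-1}`, its derivative being
`-k (t - x)₊^{k-1}`; a divided difference is a finite linear combination of values, so it
inherits this smoothness in `x`.
-/

/-- The Cox–de Boor recursion for B-splines over the knot sequence `ξ`:
`coxDeBoor ξ k ℓ` is the B-spline `B_{ℓ,k}`. -/
noncomputable def coxDeBoor (ξ : ℕ → ℝ) : ℕ → ℕ → ℝ → ℝ
  | 0, ℓ, x => if ξ ℓ < x ∧ x ≤ ξ (ℓ + 1) then 1 else 0
  | k + 1, ℓ, x =>
      ((x - ξ ℓ) / (ξ (ℓ + (k + 1)) - ξ ℓ)) * coxDeBoor ξ k ℓ x +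
      ((ξ (ℓ + 1 + (k + 1)) - x) / (ξ (ℓ + 1 + (k + 1)) - ξ (ℓ + 1))) * coxDeBoor ξ k (ℓ + 1) x

open Set

/-- `(t - x)₊^k`. For `k = 0` it is the indicator of `x ≤ t`, so that differences of these give
the half-open intervals `(ξ ℓ, ξ (ℓ + 1)]` of the order-zero B-splines. -/
noncomputable def truncPow (k : ℕ) (t x : ℝ) : ℝ := if x ≤ t then (t - x) ^ k else 0

theorem truncPow_succ (k : ℕ) (t x : ℝ) : truncPow (k + 1) t x = (t - x) * truncPow k t x := by
  unfold truncPow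
  split_ifs <;> ring

theorem truncPow_succ_of_le {k : ℕ} {t x : ℝ} (h : t ≤ x) : truncPow (k + 1) t x = 0 := by
  unfold truncPow
  split_ifs with hx
  · rw [le_antisymm hx h, sub_self, zero_pow k.succ_ne_zero]
  · rfl

theorem hasDerivWithinAt_truncPow_Iic {k : ℕ} {t x : ℝ} (hx : x ≤ t) :
    HasDerivWithinAt (truncPow (k + 1) t) (-(k + 1 : ℕ) * truncPow k t x) (Iic t) x := by
  have h := (((hasDerivAt_id x).const_sub t).pow (k + 1)).hasDerivWithinAt (s := Iic t)
  refine (h.congr (fun y hy => if_pos hy) (if_pos hx)).congr_deriv ?_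
  simp only [truncPow, if_pos hx, Nat.add_sub_cancel, id]
  ring

theorem hasDerivAt_truncPow (k : ℕ) (t x : ℝ) :
    HasDerivAt (truncPow (k + 2) t) (-(k + 2 : ℕ) * truncPow (k + 1) t x) x := by
  have hIci {x : ℝ} (hx : t ≤ x) :
      HasDerivWithinAt (truncPow (k + 2) t) (-(k + 2 : ℕ) * truncPow (k + 1) t x) (Ici t) x := by
    rw [truncPow_succ_of_le hx, mul_zero]
    exact (hasDerivWithinAt_const x _ 0).congr (fun y hy => truncPow_succ_of_le hy)
      (truncPow_succ_of_le hx)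
  rcases lt_trichotomy x t with hx | rfl | hx
  · exact (hasDerivWithinAt_truncPow_Iic hx.le).hasDerivAt (Iic_mem_nhds hx)
  · simpa only [Iic_union_Ici, hasDerivWithinAt_univ] using
      (hasDerivWithinAt_truncPow_Iic le_rfl).union (hIci le_rfl)
  · exact (hIci hx.le).hasDerivAt (Ici_mem_nhds hx)

theorem contDiff_truncPow (k : ℕ) (t : ℝ) : ContDiff ℝ k (truncPow (k + 1) t) := by
  induction k with
  | zero =>
    rw [Nat.cast_zero, contDiff_zero]
    exact ((continuous_const.sub continuous_id).pow 1).if_le continuous_const continuous_id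
      continuous_const fun x hx => by simp [hx]
  | succ k ih =>
    have hderiv := hasDerivAt_truncPow k t
    rw [Nat.cast_succ, contDiff_succ_iff_deriv]
    refine ⟨fun x => (hderiv x).differentiableAt, by simp, ?_⟩
    rw [funext fun x => (hderiv x).deriv]
    exact contDiff_const.mul ih

/-- The divided difference `[ξ ℓ, …, ξ (ℓ + m)] f`. -/
noncomputable def divDiff (ξ : ℕ → ℝ) : ℕ → ℕ → (ℝ → ℝ) → ℝ
  | 0, ℓ, f => f (ξ ℓ)
  | m + 1, ℓ, f => (divDiff ξ m (ℓ + 1) f - divDiff ξ m ℓ f) / (ξ (ℓ + m + 1) - ξ ℓ)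

theorem divDiff_succ (ξ : ℕ → ℝ) (m ℓ : ℕ) (f : ℝ → ℝ) :
    divDiff ξ (m + 1) ℓ f = (divDiff ξ m (ℓ + 1) f - divDiff ξ m ℓ f) / (ξ (ℓ + m + 1) - ξ ℓ) :=
  rfl

theorem contDiff_divDiff {n : WithTop ℕ∞} {F : ℝ → ℝ → ℝ} (hF : ∀ t, ContDiff ℝ n (F t))
    (ξ : ℕ → ℝ) (m ℓ : ℕ) : ContDiff ℝ n fun x => divDiff ξ m ℓ fun t => F t x := by
  induction m generalizing ℓ with
  | zero => exact hF (ξ ℓ)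
  | succ m ih => exact ((ih (ℓ + 1)).sub (ih ℓ)).div_const _

section StrictMonoKnots

variable {N : ℕ} {ξ : ℕ → ℝ} (hξ : StrictMonoOn ξ (Iic N))
include hξ

theorem sub_ne_zero_of_strictMonoOn_Iic {i j : ℕ} (hij : j < i) (hi : i ≤ N) : ξ i - ξ j ≠ 0 :=
  sub_ne_zero.2 (hξ (mem_Iic.2 (hij.le.trans hi)) (mem_Iic.2 hi) hij).ne'

theorem divDiff_sub_mul (x : ℝ) (f : ℝ → ℝ) (m ℓ : ℕ) (h : ℓ + m + 1 ≤ N) :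
    divDiff ξ (m + 1) ℓ (fun t => (t - x) * f t)
      = (ξ ℓ - x) * divDiff ξ (m + 1) ℓ f + divDiff ξ m (ℓ + 1) f := by
  induction m generalizing ℓ with
  | zero =>
    have hd := sub_ne_zero_of_strictMonoOn_Iic hξ (Nat.lt_succ_self ℓ) h
    simp only [divDiff, add_zero] at hd ⊢
    field_simp
    ring
  | succ m ih =>
    have hd := sub_ne_zero_of_strictMonoOn_Iic hξ (by omega : ℓ < ℓ + (m + 1) + 1) h
    have hd' := sub_ne_zero_of_strictMonoOn_Iic hξ (by omega : ℓ + 1 < ℓ + 1 + m + 1) (by omega)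
    have hrec : divDiff ξ (m + 1) (ℓ + 1) f * (ξ (ℓ + 1 + m + 1) - ξ (ℓ + 1))
        = divDiff ξ m (ℓ + 1 + 1) f - divDiff ξ m (ℓ + 1) f :=
      div_mul_cancel₀ _ hd'
    rw [show ℓ + 1 + m + 1 = ℓ + (m + 1) + 1 by omega] at hrec
    rw [divDiff_succ ξ (m + 1) ℓ (fun t => (t - x) * f t), ih (ℓ + 1) (by omega), ih ℓ (by omega),
      divDiff_succ ξ (m + 1) ℓ f]
    field_simp
    linear_combination -hrec

theorem coxDeBoor_eq_mul_divDiff_truncPow {k ℓ : ℕ} (h : ℓ + k + 1 ≤ N) (x : ℝ) :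
    coxDeBoor ξ k ℓ x = (ξ (ℓ + k + 1) - ξ ℓ) * divDiff ξ (k + 1) ℓ (fun t => truncPow k t x) := by
  induction k generalizing ℓ with
  | zero =>
    have hlt : ξ ℓ < ξ (ℓ + 1) := hξ (mem_Iic.2 (by omega)) (mem_Iic.2 h) (Nat.lt_succ_self ℓ)
    rw [divDiff_succ, mul_div_cancel₀ _ (sub_ne_zero.2 hlt.ne')]
    simp only [coxDeBoor, divDiff, truncPow, pow_zero]
    split_ifs <;> grind
  | succ k ih =>
    set g : ℝ → ℝ := fun t => truncPow k t x
    have hd₁ := sub_ne_zero_of_strictMonoOn_Iic hξ (by omega : ℓ < ℓ + k + 1) (by omega)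
    have hd₂ := sub_ne_zero_of_strictMonoOn_Iic hξ (by omega : ℓ + 1 < ℓ + k + 2) h
    have hd₃ := sub_ne_zero_of_strictMonoOn_Iic hξ (by omega : ℓ < ℓ + k + 2) h
    have hrec : (ξ (ℓ + k + 2) - ξ ℓ) * divDiff ξ (k + 2) ℓ g
        = divDiff ξ (k + 1) (ℓ + 1) g - divDiff ξ (k + 1) ℓ g :=
      mul_div_cancel₀ _ hd₃
    have hcox : coxDeBoor ξ (k + 1) ℓ x
        = (x - ξ ℓ) * divDiff ξ (k + 1) ℓ g + (ξ (ℓ + k + 2) - x) * divDiff ξ (k + 1) (ℓ + 1) g := by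
      rw [coxDeBoor, ih (by omega), ih (by omega), ← add_assoc ℓ k 1,
        show ℓ + 1 + (k + 1) = ℓ + k + 2 by omega, show ℓ + 1 + k + 1 = ℓ + k + 2 by omega]
      field_simp
    rw [hcox, funext fun t => truncPow_succ k t x, divDiff_sub_mul hξ x g (k + 1) ℓ h]
    linear_combination (x - ξ ℓ) * hrec

end StrictMonoKnots

/-- Smoothness of B-splines: the B-spline of order `k ≥ 1` is `(k-1)`-times
continuously differentiable on all of `ℝ`. -/
theorem bspline_contDiff
    (n : ℕ) (ξ : ℕ → ℝ) (hξ : ∀ i, i ≤ n → ξ i < ξ (i + 1))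
    (k ℓ : ℕ) (hk : 1 ≤ k) (hℓ : ℓ + k ≤ n) :
    ContDiff ℝ ((k : ℕ) - 1 : ℕ) (coxDeBoor ξ k ℓ) := by
  obtain ⟨k, rfl⟩ := Nat.exists_eq_add_of_le' hk
  have hmono : StrictMonoOn ξ (Iic (n + 1)) :=
    strictMonoOn_Iic_of_lt_succ fun i hi => hξ i (by omega)
  rw [funext (coxDeBoor_eq_mul_divDiff_truncPow hmono (by omega)), Nat.add_sub_cancel]
  exact contDiff_const.mul (contDiff_divDiff (contDiff_truncPow k) ξ _ _)
end

section
/- Linear independence of B-splines: for every order k ≤ n, the family of B-splines {B_{ℓ,k} : ℓ = 0, 1, …, n−k}, regarded as elements of the real vector space of functions from ℝ to ℝ, is linearly independent; consequently the splines of order k over these knots (with the zero boundary conditions) span an (n−k+1)-dimensional space. -/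
/-- B-splines vanish to the left of their support. -/
lemma coxDeBoor_eq_zero_left {n : ℕ} {ξ : ℕ → ℝ} (hξ : ∀ i, i ≤ n → ξ i < ξ (i + 1)) :
    ∀ k ℓ, ℓ + k ≤ n → ∀ x, x ≤ ξ ℓ → coxDeBoor ξ k ℓ x = 0 := by
  intro k
  induction k with
  | zero =>
    intro ℓ _ x hx
    simp only [coxDeBoor]
    rw [if_neg]
    rintro ⟨h1, _⟩
    exact absurd hx (not_le.2 h1)
  | succ k ih =>
    intro ℓ hℓ x hx
    have h1 : coxDeBoor ξ k ℓ x = 0 := ih ℓ (by omega) x hx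
    have h2 : coxDeBoor ξ k (ℓ + 1) x = 0 :=
      ih (ℓ + 1) (by omega) x (hx.trans (hξ ℓ (by omega)).le)
    simp [coxDeBoor, h1, h2]

lemma xi_strictMono {n : ℕ} {ξ : ℕ → ℝ} (hξ : ∀ i, i ≤ n → ξ i < ξ (i + 1)) :
    ∀ i j, i < j → j ≤ n + 1 → ξ i < ξ j := by
  intro i j hij hj
  induction j with
  | zero => omega
  | succ j ih =>
    rcases Nat.lt_or_ge i j with h | h
    · exact (ih h (by omega)).trans (hξ j (by omega))
    · have : i = j := by omega
      subst this; exact hξ i (by omega)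

/-- B-splines are positive on the first knot interval of their support. -/
lemma coxDeBoor_pos {n : ℕ} {ξ : ℕ → ℝ} (hξ : ∀ i, i ≤ n → ξ i < ξ (i + 1)) :
    ∀ k ℓ, ℓ + k ≤ n → ∀ x, ξ ℓ < x → x ≤ ξ (ℓ + 1) → 0 < coxDeBoor ξ k ℓ x := by
  intro k
  induction k with
  | zero =>
    intro ℓ _ x h1 h2
    simp [coxDeBoor, h1, h2]
  | succ k ih =>
    intro ℓ hℓ x h1 h2
    have hz : coxDeBoor ξ k (ℓ + 1) x = 0 :=
      coxDeBoor_eq_zero_left hξ k (ℓ + 1) (by omega) x h2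
    have hpos : 0 < coxDeBoor ξ k ℓ x := ih ℓ (by omega) x h1 h2
    have hd : 0 < ξ (ℓ + (k + 1)) - ξ ℓ := by
      have := xi_strictMono hξ ℓ (ℓ + (k + 1)) (by omega) (by omega)
      linarith
    simp only [coxDeBoor, hz, mul_zero, add_zero]
    exact mul_pos (div_pos (by linarith) hd) hpos

/-- Linear independence of B-splines: the family `{B_{ℓ,k} : 0 ≤ ℓ ≤ n-k}` is
linearly independent in the space of functions `ℝ → ℝ`, so the space of
splines of order `k` (with the zero boundary conditions) that it spans has
dimension `n - k + 1`. -/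
theorem bspline_linearIndependent
    (n : ℕ) (ξ : ℕ → ℝ) (hξ : ∀ i, i ≤ n → ξ i < ξ (i + 1))
    (k : ℕ) (hk : k ≤ n) :
    LinearIndependent ℝ (fun ℓ : Fin (n - k + 1) => coxDeBoor ξ k (ℓ : ℕ)) ∧
    Module.finrank ℝ
      (Submodule.span ℝ (Set.range fun ℓ : Fin (n - k + 1) => coxDeBoor ξ k (ℓ : ℕ)))
      = n - k + 1 := by
  -- evaluation points: midpoints of the knot intervals
  set z : Fin (n - k + 1) → ℝ := fun i => (ξ (i : ℕ) + ξ ((i : ℕ) + 1)) / 2 with hz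
  have hzmem : ∀ i : Fin (n - k + 1), ξ (i : ℕ) < z i ∧ z i < ξ ((i : ℕ) + 1) := by
    intro i
    have hi : (i : ℕ) ≤ n - k := by omega
    have := hξ (i : ℕ) (by omega)
    constructor <;> (simp only [hz]; linarith)
  -- the evaluation matrix
  set M : Matrix (Fin (n - k + 1)) (Fin (n - k + 1)) ℝ :=
    fun ℓ i => coxDeBoor ξ k (ℓ : ℕ) (z i) with hM
  have hzero : ∀ ℓ i : Fin (n - k + 1), i < ℓ → M ℓ i = 0 := by
    intro ℓ i hlt
    apply coxDeBoor_eq_zero_left hξ k (ℓ : ℕ) (by omega) (z i)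
    have h1 : z i < ξ ((i : ℕ) + 1) := (hzmem i).2
    have h2 : ξ ((i : ℕ) + 1) ≤ ξ (ℓ : ℕ) := by
      rcases Nat.lt_or_ge ((i : ℕ) + 1) (ℓ : ℕ) with h | h
      · exact (xi_strictMono hξ _ _ h (by omega)).le
      · have : (i : ℕ) + 1 = (ℓ : ℕ) := by
          have := (Fin.lt_iff_val_lt_val.1 hlt); omega
        rw [this]
    linarith
  have hdiag : ∀ i : Fin (n - k + 1), 0 < M i i := fun i =>
    coxDeBoor_pos hξ k (i : ℕ) (by omega) (z i) (hzmem i).1 (hzmem i).2.le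
  have htri : M.BlockTriangular id := fun i j h => hzero i j h
  have hdet : M.det ≠ 0 := by
    rw [Matrix.det_of_upperTriangular htri]
    exact (Finset.prod_pos fun i _ => hdiag i).ne'
  have hunit : IsUnit M := (Matrix.isUnit_iff_isUnit_det M).2 (isUnit_iff_ne_zero.2 hdet)
  have hrows : LinearIndependent ℝ (fun ℓ => M ℓ) :=
    Matrix.linearIndependent_rows_iff_isUnit.2 hunit
  -- pull back along the evaluation linear map
  have hLI : LinearIndependent ℝ (fun ℓ : Fin (n - k + 1) => coxDeBoor ξ k (ℓ : ℕ)) := by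
    let L : (ℝ → ℝ) →ₗ[ℝ] (Fin (n - k + 1) → ℝ) :=
      LinearMap.pi fun i => LinearMap.proj (z i)
    have hcomp : (⇑L ∘ fun ℓ : Fin (n - k + 1) => coxDeBoor ξ k (ℓ : ℕ)) = fun ℓ => M ℓ := rfl
    exact LinearIndependent.of_comp L (hcomp ▸ hrows)
  refine ⟨hLI, ?_⟩
  rw [finrank_span_eq_card hLI, Fintype.card_fin]
end
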